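/- Let G = (V, E) be a finite weighted directed graph with weights in a unital quantale Σ, T a tree decomposition of G, u, v ∈ V, and B_1, B_2, …, B_j a simple path of bags in T such that u ∈ B_1 and v ∈ B_j. Let A = {u} × Π_{1 < i ≤ j} (B_{i−1} ∩ B_i) × {v}, i.e. the set of tuples (x_1, …, x_{j+1}) with x_1 = u, x_{j+1} = v, and x_i ∈ B_{i−1} ∩ B_i for every 1 < i ≤ j. Then d(u, v) = ⨆_{(x_1, …, x_{j+1}) ∈ A} ⊗_{i=1}^{j} d(x_i, x_{i+1}). -/

import Mathlib

/-- A path from `u` to `v` in the directed graph with edge relation `E`. -/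
def IsPath {V : Type*} (E : V → V → Prop) (u v : V) (l : List V) : Prop :=
  l ≠ [] ∧ l.head? = some u ∧ l.getLast? = some v ∧ l.Chain' E

/-- The weight of a path: the ordered product of the weights of its edges,
`1` for a 0-length path. -/
def pathWeight {V M : Type*} [Monoid M] (wt : V → V → M) (l : List V) : M :=
  ((l.zip l.tail).map fun p => wt p.1 p.2).prod

/-- The algebraic distance: supremum of the weights of all paths from `u` to `v`. -/
def gdist {V Q : Type*} [CompleteLattice Q] [Monoid Q]
    (E : V → V → Prop) (wt : V → V → Q) (u v : V) : Q :=
  ⨆ l ∈ {l : List V | IsPath E u v l}, pathWeight wt l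

/-- A tree decomposition of the graph with node set `V` and edge relation `E`. -/
structure TreeDecomp (V : Type*) (E : V → V → Prop) (ι : Type*) where
  T : SimpleGraph ι
  isTree : T.IsTree
  bag : ι → Set V
  covers_nodes : ∀ v, ∃ i, v ∈ bag i
  covers_edges : ∀ u v, E u v → ∃ i, u ∈ bag i ∧ v ∈ bag i
  bags_connected : ∀ v, (T.induce {i | v ∈ bag i}).Connected

/-!
Each product `⊗ d(x_i, x_{i+1})` is at most `d(u, v)` by the triangle inequality
`d(a, c) ⊗ d(c, b) ≤ d(a, b)`: concatenating paths multiplies their weights, and `⊗` distributes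
over suprema. Conversely, every edge `{B_{i-1}, B_i}` of the tree path is a bridge of the tree, and
a node lying in bags on both sides of it lies in `B_{i-1} ∩ B_i` (condition C3), while each edge of
`G` stays inside one side (C2). So a path from `u` to `v` crosses `B_1 ∩ B_2`, then `B_2 ∩ B_3`, and
so on; cutting it at these crossing nodes `x_i` bounds its weight by `⊗ d(x_i, x_{i+1})`.
-/

theorem List.exists_eq_append_cons_mem_inter_of_isChain {α : Type*} {r : α → α → Prop}
    {L R : Set α} (hr : ∀ a b, r a b → a ∈ L ∧ b ∈ L ∨ a ∈ R ∧ b ∈ R) :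
    ∀ {a : α} {t : List α}, (a :: t).IsChain r → a ∈ L →
      (a :: t).getLast (List.cons_ne_nil a t) ∈ R → ∃ s x t', a :: t = s ++ x :: t' ∧ x ∈ L ∩ R
  | a, [], _, haL, haR => ⟨[], a, [], rfl, haL, haR⟩
  | a, b :: t, hc, haL, hlast => by
    by_cases haR : a ∈ R
    · exact ⟨[], a, b :: t, rfl, haL, haR⟩
    rw [List.isChain_cons_cons] at hc
    have hbL : b ∈ L := ((hr a b hc.1).resolve_right fun h => haR h.1).2
    obtain ⟨s, x, t', heq, hx⟩ :=
      exists_eq_append_cons_mem_inter_of_isChain hr hc.2 hbL (by simpa using hlast)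
    exact ⟨a :: s, x, t', by rw [heq, List.cons_append], hx⟩

section Path
variable {V : Type*} {E : V → V → Prop} {u v x : V} {l s t : List V}

theorem IsPath.exists_eq_cons (h : IsPath E u v l) : ∃ t, l = u :: t :=
  List.head?_eq_some_iff.mp h.2.1

theorem IsPath.exists_eq_append_singleton (h : IsPath E u v l) : ∃ s, l = s ++ [v] :=
  List.getLast?_eq_some_iff.mp h.2.2.1

theorem isPath_singleton (u : V) : IsPath E u u [u] :=
  ⟨List.cons_ne_nil u [], rfl, rfl, List.isChain_singleton u⟩

theorem isPath_append_cons_iff :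
    IsPath E u v (s ++ x :: t) ↔ IsPath E u x (s ++ [x]) ∧ IsPath E x v (x :: t) := by
  have hhead : (s ++ x :: t).head? = (s ++ [x]).head? := by simp [List.head?_append]
  refine ⟨fun ⟨_, hh, hl, hc⟩ => ?_, fun ⟨⟨_, hh, _, hc₁⟩, ⟨_, _, hl, hc₂⟩⟩ => ?_⟩
  · obtain ⟨hc₁, hc₂⟩ := List.isChain_split.mp hc
    exact ⟨⟨by simp, hhead ▸ hh, by simp, hc₁⟩,
      ⟨by simp, rfl, List.getLast?_append_cons s x t ▸ hl, hc₂⟩⟩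
  · exact ⟨by simp, hhead ▸ hh, (List.getLast?_append_cons s x t).symm ▸ hl,
      List.isChain_split.mpr ⟨hc₁, hc₂⟩⟩

end Path

section Weight
variable {V M : Type*} [Monoid M] (wt : V → V → M)

@[simp]
theorem pathWeight_singleton (a : V) : pathWeight wt [a] = 1 := by
  simp [pathWeight]

@[simp]
theorem pathWeight_cons_cons (a b : V) (l : List V) :
    pathWeight wt (a :: b :: l) = wt a b * pathWeight wt (b :: l) := by
  simp [pathWeight]

theorem pathWeight_append_cons (x : V) (t : List V) :
    ∀ s : List V, pathWeight wt (s ++ x :: t) = pathWeight wt (s ++ [x]) * pathWeight wt (x :: t)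
  | [] => by simp
  | [a] => by simp
  | a :: b :: s => by
    have ih := pathWeight_append_cons x t (b :: s)
    simp only [List.cons_append] at ih ⊢
    rw [pathWeight_cons_cons, pathWeight_cons_cons, ih, mul_assoc]

end Weight

section Distance
variable {V Q : Type*} [CompleteLattice Q] [Monoid Q] {E : V → V → Prop} (wt : V → V → Q)
  {u v x : V}

theorem IsPath.pathWeight_le_gdist {l : List V} (h : IsPath E u v l) :
    pathWeight wt l ≤ gdist E wt u v :=
  le_iSup₂ (f := fun l _ => pathWeight wt l) l h

theorem one_le_gdist_self (u : V) : 1 ≤ gdist E wt u u := by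
  simpa using (isPath_singleton (E := E) u).pathWeight_le_gdist wt

variable [IsQuantale Q]

theorem gdist_mul_gdist_le : gdist E wt u x * gdist E wt x v ≤ gdist E wt u v := by
  simp only [gdist, iSup_subtype', Quantale.iSup_mul_distrib, Quantale.mul_iSup_distrib]
  refine iSup_le fun ⟨l₂, h₂⟩ => iSup_le fun ⟨l₁, h₁⟩ => ?_
  obtain ⟨s, rfl⟩ := IsPath.exists_eq_append_singleton h₁
  obtain ⟨t, rfl⟩ := IsPath.exists_eq_cons h₂
  exact le_iSup_of_le ⟨_, isPath_append_cons_iff.mpr ⟨h₁, h₂⟩⟩ (pathWeight_append_cons ..).ge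

theorem pathWeight_gdist_le :
    ∀ {xs : List V} {u v : V}, xs.head? = some u → xs.getLast? = some v →
      pathWeight (gdist E wt) xs ≤ gdist E wt u v
  | [], _, _, hu, _ => by simp at hu
  | [a], u, v, hu, hv => by
    obtain rfl : a = u := by simpa using hu
    obtain rfl : a = v := by simpa using hv
    simpa using one_le_gdist_self wt a
  | a :: b :: xs, u, v, hu, hv => by
    obtain rfl : a = u := by simpa using hu
    rw [pathWeight_cons_cons]
    exact (mul_le_mul_right (pathWeight_gdist_le rfl (by simpa using hv)) _).trans
      (gdist_mul_gdist_le wt)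

end Distance

section SeparatorTuples
open SimpleGraph

variable {V ι : Type*} (bag : ι → Set V) {T : SimpleGraph ι}

def separatorTuples {i k : ι} (p : T.Walk i k) (u v : V) : Set (List V) :=
  {xs | xs.length = p.support.length + 1 ∧ xs.head? = some u ∧ xs.getLast? = some v ∧
    ∀ n, 1 ≤ n → n < p.support.length →
      xs.getD n u ∈ bag (p.support.getD (n - 1) i) ∩ bag (p.support.getD n i)}

theorem pair_mem_separatorTuples_nil (i : ι) (u v : V) :
    [u, v] ∈ separatorTuples bag (Walk.nil : T.Walk i i) u v :=
  ⟨rfl, rfl, rfl, fun n h₁ h₂ => by simp at h₂; omega⟩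

theorem cons_mem_separatorTuples_cons {i j k : ι} (h : T.Adj i j) {q : T.Walk j k}
    {u v x : V} {xs : List V} (hxs : xs ∈ separatorTuples bag q x v)
    (hx : x ∈ bag i ∩ bag j) : u :: xs ∈ separatorTuples bag (.cons h q) u v := by
  obtain ⟨hlen, hhead, hlast, hmem⟩ := hxs
  obtain ⟨t, rfl⟩ := List.head?_eq_some_iff.mp hhead
  refine ⟨by simp [hlen], rfl, by simpa using hlast, ?_⟩
  rintro (_ | _ | n) h₁ h₂
  · omega
  · rw [Walk.support_cons, ← q.cons_tail_support]
    simpa using hx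
  · simp only [Walk.support_cons, List.length_cons] at h₂ hlen
    have := hmem (n + 1) (by omega) (by omega)
    simp only [Walk.support_cons, List.getD_cons_succ, Nat.add_sub_cancel] at this ⊢
    have hn : n < t.length := by omega
    have hn' : n + 1 < q.support.length := by omega
    simpa [List.getElem?_eq_getElem hn, List.getElem?_eq_getElem hn',
      List.getElem?_eq_getElem (Nat.lt_of_succ_lt hn')] using this

end SeparatorTuples

namespace TreeDecomp
open SimpleGraph

variable {V ι : Type*} {E : V → V → Prop} (td : TreeDecomp V E ι) {i j a b : ι}

theorem mem_bag_inter_of_reachable_of_not_reachable {x : V}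
    (ha : (td.T.deleteEdges {s(i, j)}).Reachable i a)
    (hb : ¬(td.T.deleteEdges {s(i, j)}).Reachable i b) (hxa : x ∈ td.bag a)
    (hxb : x ∈ td.bag b) : x ∈ td.bag i ∩ td.bag j := by
  obtain ⟨W⟩ := td.bags_connected x ⟨a, hxa⟩ ⟨b, hxb⟩
  set W' := W.map (Embedding.induce {k | x ∈ td.bag k}).toHom
  have hij : s(i, j) ∈ W'.edges := by
    by_contra h
    exact hb (ha.trans (reachable_deleteEdges_iff_exists_walk.mpr ⟨W', h⟩))
  have hsupp : ∀ k ∈ W'.support, x ∈ td.bag k := by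
    simp only [W', Walk.support_map, List.mem_map]
    rintro _ ⟨c, -, rfl⟩
    exact c.2
  exact ⟨hsupp i (W'.fst_mem_support_of_mem_edges hij),
    hsupp j (W'.snd_mem_support_of_mem_edges hij)⟩

theorem exists_eq_append_cons_mem_bag_inter {u v : V} {l : List V}
    (ha : (td.T.deleteEdges {s(i, j)}).Reachable i a)
    (hb : ¬(td.T.deleteEdges {s(i, j)}).Reachable i b) (hu : u ∈ td.bag a)
    (hv : v ∈ td.bag b) (hl : IsPath E u v l) :
    ∃ s x t, l = s ++ x :: t ∧ x ∈ td.bag i ∩ td.bag j := by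
  set L := {y | ∃ c, (td.T.deleteEdges {s(i, j)}).Reachable i c ∧ y ∈ td.bag c}
  set R := {y | ∃ c, ¬(td.T.deleteEdges {s(i, j)}).Reachable i c ∧ y ∈ td.bag c}
  have hE : ∀ y z, E y z → y ∈ L ∧ z ∈ L ∨ y ∈ R ∧ z ∈ R := by
    intro y z hyz
    obtain ⟨c, hy, hz⟩ := td.covers_edges y z hyz
    by_cases hc : (td.T.deleteEdges {s(i, j)}).Reachable i c
    exacts [.inl ⟨⟨c, hc, hy⟩, c, hc, hz⟩, .inr ⟨⟨c, hc, hy⟩, c, hc, hz⟩]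
  obtain ⟨t, rfl⟩ := hl.exists_eq_cons
  have hlast : (u :: t).getLast (List.cons_ne_nil u t) = v := by
    simpa [List.getLast?_eq_some_getLast] using hl.2.2.1
  obtain ⟨s, x, t', heq, ⟨c, hc, hxc⟩, ⟨d, hd, hxd⟩⟩ :=
    List.exists_eq_append_cons_mem_inter_of_isChain hE hl.2.2.2 ⟨a, ha, hu⟩ (hlast ▸ ⟨b, hb, hv⟩)
  exact ⟨s, x, t', heq, td.mem_bag_inter_of_reachable_of_not_reachable hc hd hxc hxd⟩

variable {Q : Type*} [CompleteLattice Q] [Monoid Q] [MulLeftMono Q] [MulRightMono Q]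
  (wt : V → V → Q)

theorem exists_mem_separatorTuples_pathWeight_le {i k : ι} (p : td.T.Walk i k) (hp : p.IsPath)
    {u v : V} (hu : u ∈ td.bag i) (hv : v ∈ td.bag k) {l : List V} (hl : IsPath E u v l) :
    ∃ xs ∈ separatorTuples td.bag p u v, pathWeight wt l ≤ pathWeight (gdist E wt) xs := by
  induction p generalizing u l with
  | nil =>
    exact ⟨[u, v], pair_mem_separatorTuples_nil _ _ u v, by simpa using hl.pathWeight_le_gdist wt⟩
  | @cons i j k h q ih =>
    rw [Walk.cons_isPath_iff] at hp
    have hjk : (td.T.deleteEdges {s(i, j)}).Reachable j k :=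
      reachable_deleteEdges_iff_exists_walk.mpr
        ⟨q, fun he => hp.2 (q.fst_mem_support_of_mem_edges he)⟩
    have hik : ¬(td.T.deleteEdges {s(i, j)}).Reachable i k := fun hik =>
      isAcyclic_iff_forall_adj_isBridge.mp td.isTree.isAcyclic h (hik.trans hjk.symm)
    obtain ⟨s, x, t, rfl, hx⟩ := td.exists_eq_append_cons_mem_bag_inter .rfl hik hu hv hl
    obtain ⟨hs, ht⟩ := isPath_append_cons_iff.mp hl
    obtain ⟨xs, hxs, hle⟩ := ih hp.1 hx.2 hv ht
    refine ⟨u :: xs, cons_mem_separatorTuples_cons _ h hxs hx, ?_⟩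
    obtain ⟨ys, rfl⟩ := List.head?_eq_some_iff.mp hxs.2.1
    rw [pathWeight_append_cons, pathWeight_cons_cons]
    exact mul_le_mul' (hs.pathWeight_le_gdist wt) hle

end TreeDecomp

/-- The path of bags `B_1, …, B_j` is `p.support`, and a tuple `(x_1, …, x_{j+1})` is a list `xs`
indexed from `0`: `xs.getD k u` is `x_{k+1}` and `p.support.getD k i1` is `B_{k+1}` (the defaults
of `getD` are never used). -/
theorem stmt_5_general {V ι Q : Type*} [CompleteLattice Q] [Monoid Q]
    (hdl : ∀ (a : Q) (S : Set Q), a * sSup S = ⨆ s ∈ S, a * s)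
    (hdr : ∀ (a : Q) (S : Set Q), sSup S * a = ⨆ s ∈ S, s * a)
    (E : V → V → Prop) (wt : V → V → Q) (td : TreeDecomp V E ι)
    (u v : V) (i1 ij : ι) (p : td.T.Walk i1 ij) (hp : p.IsPath)
    (hu : u ∈ td.bag i1) (hv : v ∈ td.bag ij) :
    gdist E wt u v =
      ⨆ xs ∈ {xs : List V |
          xs.length = p.support.length + 1 ∧
          xs.head? = some u ∧ xs.getLast? = some v ∧
          ∀ k, 1 ≤ k → k < p.support.length →
            xs.getD k u ∈ td.bag (p.support.getD (k - 1) i1) ∩ td.bag (p.support.getD k i1)},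
        pathWeight (gdist E wt) xs := by
  have : IsQuantale Q := ⟨hdl, fun S a => hdr a S⟩
  change gdist E wt u v = ⨆ xs ∈ separatorTuples td.bag p u v, pathWeight (gdist E wt) xs
  apply le_antisymm
  · refine iSup₂_le fun l hl => ?_
    obtain ⟨xs, hxs, hle⟩ := td.exists_mem_separatorTuples_pathWeight_le wt p hp hu hv hl
    exact hle.trans (le_iSup₂ (f := fun xs _ => pathWeight (gdist E wt) xs) xs hxs)
  · exact iSup₂_le fun xs ⟨_, hhead, hlast, _⟩ => pathWeight_gdist_le wt hhead hlast

/-- Let G = (V, E) be a finite weighted directed graph with weights in a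
unital quantale Σ, T a tree decomposition of G, u, v ∈ V, and B_1, …, B_j a simple path
of bags in T such that u ∈ B_1 and v ∈ B_j. Let A be the set of tuples
(x_1, …, x_{j+1}) with x_1 = u, x_{j+1} = v, and x_i ∈ B_{i−1} ∩ B_i for every 1 < i ≤ j.
Then d(u, v) = ⨆_{(x_1,…,x_{j+1}) ∈ A} ⊗_{i=1}^{j} d(x_i, x_{i+1}).
The simple path of bags B_1, …, B_j is given as the support of a simple walk `p` in T,
and a tuple (x_1, …, x_{j+1}) is encoded as a list `xs` of length j+1 (indexed from 0,
so that `xs.getD k u` is x_{k+1} and `p.support.getD k i1` is B_{k+1}); the product of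
consecutive distances along `xs` is `pathWeight (gdist E wt) xs`. -/
theorem stmt_5 {V ι Q : Type*} [Fintype V] [Fintype ι] [CompleteLattice Q] [Monoid Q]
    (hdl : ∀ (a : Q) (S : Set Q), a * sSup S = ⨆ s ∈ S, a * s)
    (hdr : ∀ (a : Q) (S : Set Q), sSup S * a = ⨆ s ∈ S, s * a)
    (E : V → V → Prop) (wt : V → V → Q) (td : TreeDecomp V E ι)
    (u v : V) (i1 ij : ι) (p : td.T.Walk i1 ij) (hp : p.IsPath)
    (hu : u ∈ td.bag i1) (hv : v ∈ td.bag ij) :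
    gdist E wt u v =
      ⨆ xs ∈ {xs : List V |
          xs.length = p.support.length + 1 ∧
          xs.head? = some u ∧ xs.getLast? = some v ∧
          ∀ k, 1 ≤ k → k < p.support.length →
            xs.getD k u ∈ td.bag (p.support.getD (k - 1) i1) ∩ td.bag (p.support.getD k i1)},
        pathWeight (gdist E wt) xs :=
  stmt_5_general hdl hdr E wt td u v i1 ij p hp hu hv
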